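/- arXiv:1902.02748 — 3 statements merged into one kernel-verified Lean document; each statement's English description precedes it below -/
import Mathlib

section
/- Let P(e,f,g,h) = efg + efh + egh + fgh + fg over GF(2), and fix a function Z : GF(2)^4 -> GF(2) of (e,f,g,h). Then P(f,g,h, Z(e,f,g,h)+e) = P(e,f,g,h) holds for all e,f,g,h in GF(2) if and only if Z(e,f,g,h)*(fg+fh+gh) = fg + gh for all e,f,g,h in GF(2). -/
/-! With `S = fg + fh + gh`, the polynomial `P` is affine in its first argument,
`P(e,f,g,h) = e·S + fgh + fg`, and in its last one, `P(f,g,h,x) = x·S + fgh + gh`.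
Hence in characteristic 2 the two sides of the round-invariance condition differ by exactly
`Z·S + fg + gh`, pointwise in `(e,f,g,h)`. -/

/-- P(e,f,g,h) = efg + efh + egh + fgh + fg over GF(2). -/
def P1 (e f g h : ZMod 2) : ZMod 2 :=
  e*f*g + e*f*h + e*g*h + f*g*h + f*g

theorem P1_rotate_add (e f g h z : ZMod 2) :
    P1 f g h (z + e) = P1 e f g h + (z * (f*g + f*h + g*h) + (f*g + g*h)) := by
  have two_eq_zero : (2 : ZMod 2) = 0 := rfl
  unfold P1
  linear_combination (-(f * g)) * two_eq_zero

theorem P1_rotate_add_eq_iff (e f g h z : ZMod 2) :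
    P1 f g h (z + e) = P1 e f g h ↔ z * (f*g + f*h + g*h) = f*g + g*h := by
  rw [P1_rotate_add, add_eq_left, CharTwo.add_eq_zero]

theorem stmt_1 (Z : ZMod 2 → ZMod 2 → ZMod 2 → ZMod 2 → ZMod 2) :
    (∀ e f g h : ZMod 2, P1 f g h (Z e f g h + e) = P1 e f g h) ↔
      (∀ e f g h : ZMod 2, Z e f g h * (f*g + f*h + g*h) = f*g + g*h) := by
  simp only [P1_rotate_add_eq_iff]
end

section
/- Let P(a,b,c,d,e,f,g,h) = a+b+c+ac+d+bd+e+ce+f+df+g+ag+eg+h+bh+fh over GF(2). Then for all a,...,h,F,Z in GF(2): P(b,c,d,F+e,f,g,h,F+Z+a) + P(a,b,c,d,e,f,g,h) = Z*(1+c+g). Consequently, if Z is any value with Z*(1+c+g)=0, then P is invariant under the substitution (a,b,c,d,e,f,g,h) -> (b,c,d,F+e,f,g,h,F+Z+a), for every value of F. -/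
/-- The invariant P = a+b+c+ac+d+bd+e+ce+f+df+g+ag+eg+h+bh+fh over GF(2). -/
def P3 (a b c d e f g h : ZMod 2) : ZMod 2 :=
  a + b + c + a*c + d + b*d + e + c*e + f + d*f + g + a*g + e*g + h + b*h + f*h

/- Over ℤ the two sides differ by 2 (P + F (1 + c + g)): each monomial of P occurs in both
summands, and the round constant F enters through d and h with total weight 2 (1 + c + g). -/
theorem P3_round_add_P3 (a b c d e f g h F Z : ZMod 2) :
    P3 b c d (F + e) f g h (F + Z + a) + P3 a b c d e f g h = Z * (1 + c + g) := by
  linear_combination (norm := (unfold P3; ring1))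
    (P3 a b c d e f g h + F * (1 + c + g)) * CharTwo.two_eq_zero (R := ZMod 2)

theorem stmt_3 :
    (∀ a b c d e f g h F Z : ZMod 2,
      P3 b c d (F + e) f g h (F + Z + a) + P3 a b c d e f g h = Z * (1 + c + g)) ∧
    (∀ a b c d e f g h F Z : ZMod 2, Z * (1 + c + g) = 0 →
      P3 b c d (F + e) f g h (F + Z + a) = P3 a b c d e f g h) :=
  ⟨P3_round_add_P3, fun a b c d e f g h F Z hZ =>
    CharTwo.add_eq_zero.mp ((P3_round_add_P3 a b c d e f g h F Z).trans hZ)⟩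
end

section
/- Let P(e,f,g,h,m,n,o,p) = eg+fh+eo+fp+gm+hn+mo+np over GF(2). Then (1) P = (e+m)(g+o) + (f+n)(h+p) as polynomials over GF(2), and (2) the number of points x in GF(2)^8 with P(x) = 0 is exactly 160. -/
/-!
After the factorisation `P = (e + m)(g + o) + (f + n)(h + p)`, the shear
`(e, f, g, h, m, n, o, p) ↦ (e + m, f + n, g + o, h + p, m, n, o, p)` is a bijection of `GF(2)⁸`
turning `P` into the hyperbolic form `y₀ y₂ + y₁ y₃` in the first four coordinates alone.
That form has `10` zeros in `GF(2)⁴` (`y₀ y₂ = y₁ y₃`: `3 · 3 + 1 · 1`), so `P` has `10 · 2⁴ = 160`.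
-/

/-- P(e,f,g,h,m,n,o,p) = eg+fh+eo+fp+gm+hn+mo+np over GF(2). -/
def P9 (e f g h m n o p : ZMod 2) : ZMod 2 :=
  e*g + f*h + e*o + f*p + g*m + h*n + m*o + n*p

theorem P9_eq_add_mul (e f g h m n o p : ZMod 2) :
    P9 e f g h m n o p = (e + m) * (g + o) + (f + n) * (h + p) := by
  unfold P9
  ring

def Fin.addHalvesEquiv (G : Type*) [AddGroup G] (m : ℕ) :
    (Fin (m + m) → G) ≃ (Fin m → G) × (Fin m → G) where
  toFun x := (fun i => x (Fin.castAdd m i) + x (Fin.natAdd m i), fun i => x (Fin.natAdd m i))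
  invFun y := Fin.append (y.1 - y.2) y.2
  left_inv x := by
    ext i
    refine Fin.addCases (fun i => ?_) (fun i => ?_) i <;> simp [-Fin.natAdd_eq_addNat]
  right_inv y := by ext <;> simp [-Fin.natAdd_eq_addNat]

def hyperbolicForm (y : Fin 4 → ZMod 2) : ZMod 2 :=
  y 0 * y 2 + y 1 * y 3

theorem card_hyperbolicForm_eq_zero : Fintype.card {y // hyperbolicForm y = 0} = 10 := by
  decide

theorem P9_eq_hyperbolicForm_addHalves (x : Fin 8 → ZMod 2) :
    P9 (x 0) (x 1) (x 2) (x 3) (x 4) (x 5) (x 6) (x 7) =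
      hyperbolicForm (Fin.addHalvesEquiv (ZMod 2) 4 x).1 := by
  rw [P9_eq_add_mul]
  rfl

theorem stmt_9 :
    (∀ e f g h m n o p : ZMod 2,
      P9 e f g h m n o p = (e + m) * (g + o) + (f + n) * (h + p)) ∧
    Nat.card {x : Fin 8 → ZMod 2 //
      P9 (x 0) (x 1) (x 2) (x 3) (x 4) (x 5) (x 6) (x 7) = 0} = 160 := by
  refine ⟨P9_eq_add_mul, ?_⟩
  calc Nat.card {x : Fin 8 → ZMod 2 // P9 (x 0) (x 1) (x 2) (x 3) (x 4) (x 5) (x 6) (x 7) = 0}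
      = Nat.card {y : (Fin 4 → ZMod 2) × (Fin 4 → ZMod 2) // hyperbolicForm y.1 = 0} := by
        simp only [P9_eq_hyperbolicForm_addHalves]
        exact Nat.card_congr ((Fin.addHalvesEquiv (ZMod 2) 4).subtypeEquivOfSubtype
          (p := fun y => hyperbolicForm y.1 = 0))
    _ = Nat.card ({y // hyperbolicForm y = 0} × (Fin 4 → ZMod 2)) :=
        Nat.card_congr (Equiv.prodSubtypeFstEquivSubtypeProd (p := (hyperbolicForm · = 0)))
    _ = 160 := by
        rw [Nat.card_prod, Nat.card_eq_fintype_card, card_hyperbolicForm_eq_zero]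
        simp
end
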